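/- For the weight ϖ(q,p) = (e^{2ν}/|q|) e^{-ν(|q|+1/|q|)} α(arg q)(1 - |q|p²/(2σ²)) e^{-|q|p²/(2σ²)}, the function Ω(q) = ∫_{ℝ²∖{0}} (d²x/|x|²) ϖ̂_p(q, x), where ϖ̂_p(q,x) = (1/2π)∫ e^{-ip·x} ϖ(q,p) d²p, equals (πσ² e^{2ν}/|q|²) e^{-ν(|q|+1/|q|)} α(arg q); in particular Ω(1) = πσ². -/

import Mathlib

open MeasureTheory Real

/-- The weight ϖ(q,p) = (e^{2ν}/|q|) e^{-ν(|q|+1/|q|)} α(arg q)(1-|q|p²/(2σ²))e^{-|q|p²/(2σ²)}. -/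
noncomputable def varpi (ν σ : ℝ) (α : ℝ → ℂ) (q p : ℂ) : ℂ :=
  ((Real.exp (2 * ν) / ‖q‖
      * Real.exp (-(ν * (‖q‖ + 1 / ‖q‖))) : ℝ) : ℂ)
    * α (Complex.arg q)
    * (((1 - ‖q‖ * Complex.normSq p / (2 * σ ^ 2))
        * Real.exp (-(‖q‖ * Complex.normSq p / (2 * σ ^ 2))) : ℝ) : ℂ)

/-- The partial 2D Fourier transform in p:  ϖ̂_p(q,x) = (1/2π)∫ e^{-ip·x} ϖ(q,p) d²p. -/
noncomputable def hatvarpi (ν σ : ℝ) (α : ℝ → ℂ) (q x : ℂ) : ℂ :=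
  (1 / (2 * π) : ℝ) * ∫ p : ℂ,
    Complex.exp (-Complex.I * (((starRingEnd ℂ p) * x).re : ℂ)) * varpi ν σ α q p ∂volume

/-- Ω(q) = ∫_{ℝ²∖{0}} (d²x/|x|²) ϖ̂_p(q,x). -/
noncomputable def OmegaAff (ν σ : ℝ) (α : ℝ → ℂ) (q : ℂ) : ℂ :=
  ∫ x : ℂ, hatvarpi ν σ α q x / (Complex.normSq x : ℂ) ∂volume

/-! The Fourier transform in `p` of `(1 - a|p|²) e^{-a|p|²}` factors over `p = (p₁, p₂)` into
one-dimensional moments of `e^{-a t² - i s t}`, obtained by integrating the derivatives of this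
function and of `t` times it to zero; the result is `(π/a) (|x|²/4a) e^{-|x|²/4a}`. Its factor
`|x|²` cancels the weight `1/|x|²` in `Ω`, leaving the Gaussian integral
`∫ e^{-|x|²/4a} d²x = 4πa`. With `a = |q|/(2σ²)` this gives `Ω(q) = πσ²/|q|` times the
`q`-dependent prefactor of `ϖ`. -/

section ModulatedGaussian

variable {a : ℝ}

noncomputable def modulatedGaussian (a s t : ℝ) : ℂ :=
  Complex.exp (-a * t ^ 2 - Complex.I * s * t)

theorem norm_modulatedGaussian (s t : ℝ) : ‖modulatedGaussian a s t‖ = rexp (-a * t ^ 2) := by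
  simp [modulatedGaussian, Complex.norm_exp, ← Complex.ofReal_pow]

theorem continuous_modulatedGaussian (s : ℝ) : Continuous (modulatedGaussian a s) := by
  unfold modulatedGaussian; fun_prop

theorem hasDerivAt_modulatedGaussian (s t : ℝ) :
    HasDerivAt (modulatedGaussian a s)
      ((-2 * a * t - Complex.I * s) * modulatedGaussian a s t) t := by
  have hid : HasDerivAt (fun u : ℝ => (u : ℂ)) 1 t := Complex.ofRealCLM.hasDerivAt
  have hexponent : HasDerivAt (fun u : ℝ => -a * (u : ℂ) ^ 2 - Complex.I * s * u)
      (-2 * a * t - Complex.I * s) t :=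
    (((hid.pow 2).const_mul (-(a : ℂ))).sub (hid.const_mul (Complex.I * s))).congr_deriv
      (by norm_num; ring)
  rw [mul_comm]
  exact hexponent.cexp

theorem integrable_pow_mul_modulatedGaussian (ha : 0 < a) (s : ℝ) (n : ℕ) :
    Integrable (fun t : ℝ => (t : ℂ) ^ n * modulatedGaussian a s t) := by
  have h := integrable_rpow_mul_exp_neg_mul_sq ha (s := n) (by linarith [n.cast_nonneg (α := ℝ)])
  simp only [Real.rpow_natCast] at h
  have hcont := continuous_modulatedGaussian (a := a) s
  refine h.mono (by fun_prop) (.of_forall fun t => ?_)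
  simp [norm_modulatedGaussian, abs_of_pos (exp_pos _)]

theorem integrable_modulatedGaussian (ha : 0 < a) (s : ℝ) : Integrable (modulatedGaussian a s) := by
  simpa using integrable_pow_mul_modulatedGaussian ha s 0

theorem integral_modulatedGaussian (ha : 0 < a) (s : ℝ) :
    ∫ t, modulatedGaussian a s t = (π / a) ^ (1 / 2 : ℂ) * Complex.exp (-s ^ 2 / (4 * a)) := by
  have h := integral_cexp_quadratic (b := -a) (by simpa using ha) (-Complex.I * s) 0
  simp only [add_zero, neg_neg] at h
  convert h using 3
  · simp only [modulatedGaussian]; ring_nf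
  · linear_combination -(s ^ 2 / (4 * a) : ℂ) * Complex.I_sq

theorem integral_mul_modulatedGaussian (ha : 0 < a) (s : ℝ) :
    ∫ t : ℝ, (t : ℂ) * modulatedGaussian a s t
      = -(Complex.I * s / (2 * a)) * ∫ t, modulatedGaussian a s t := by
  have hint := integrable_modulatedGaussian ha s
  have hint1 : Integrable fun t : ℝ => (t : ℂ) * modulatedGaussian a s t := by
    simpa using integrable_pow_mul_modulatedGaussian ha s 1
  have h : ∫ t : ℝ, (-2 * a * ((t : ℂ) * modulatedGaussian a s t)
      - Complex.I * s * modulatedGaussian a s t) = 0 := by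
    refine integral_eq_zero_of_hasDerivAt_of_integrable (fun t => ?_)
      ((hint1.const_mul _).sub (hint.const_mul _)) hint
    exact (hasDerivAt_modulatedGaussian s t).congr_deriv (by ring)
  rw [integral_sub (hint1.const_mul _) (hint.const_mul _), integral_const_mul,
    integral_const_mul] at h
  have : (a : ℂ) ≠ 0 := by exact_mod_cast ha.ne'
  field_simp
  linear_combination -h

theorem integrable_one_sub_sq_mul_modulatedGaussian (ha : 0 < a) (s : ℝ) :
    Integrable fun t : ℝ => (1 - 2 * a * (t : ℂ) ^ 2) * modulatedGaussian a s t :=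
  ((integrable_modulatedGaussian ha s).sub
    ((integrable_pow_mul_modulatedGaussian ha s 2).const_mul (2 * a))).congr
    (.of_forall fun t => by rw [Pi.sub_apply]; ring)

theorem integral_one_sub_sq_mul_modulatedGaussian (ha : 0 < a) (s : ℝ) :
    ∫ t : ℝ, (1 - 2 * a * t ^ 2) * modulatedGaussian a s t
      = s ^ 2 / (2 * a) * ∫ t, modulatedGaussian a s t := by
  have hint1 : Integrable fun t : ℝ => (t : ℂ) * modulatedGaussian a s t := by
    simpa using integrable_pow_mul_modulatedGaussian ha s 1
  have hquad := integrable_one_sub_sq_mul_modulatedGaussian ha s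
  have h : ∫ t : ℝ, ((1 - 2 * a * t ^ 2) * modulatedGaussian a s t
      - Complex.I * s * ((t : ℂ) * modulatedGaussian a s t)) = 0 := by
    refine integral_eq_zero_of_hasDerivAt_of_integrable (fun t => ?_)
      (hquad.sub (hint1.const_mul _)) hint1
    exact ((hasDerivAt_id t).ofReal_comp.mul (hasDerivAt_modulatedGaussian s t)).congr_deriv
      (by simp only [Complex.ofReal_one, id_eq]; ring)
  rw [integral_sub hquad (hint1.const_mul _), integral_const_mul,
    integral_mul_modulatedGaussian ha] at h
  linear_combination h - (s ^ 2 / (2 * a) * ∫ t, modulatedGaussian a s t) * Complex.I_sq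

theorem modulatedGaussian_re_mul_modulatedGaussian_im (x p : ℂ) :
    modulatedGaussian a x.re p.re * modulatedGaussian a x.im p.im
      = Complex.exp (-Complex.I * (((starRingEnd ℂ p) * x).re : ℂ))
        * (rexp (-(a * Complex.normSq p)) : ℂ) := by
  simp only [modulatedGaussian, Complex.ofReal_exp, ← Complex.exp_add]
  congr 1
  simp only [Complex.mul_re, Complex.conj_re, Complex.conj_im, Complex.normSq_apply]
  push_cast
  ring

end ModulatedGaussian

theorem integral_complex_eq_integral_prod {E : Type*} [NormedAddCommGroup E] [NormedSpace ℝ E]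
    (f : ℂ → E) : ∫ z, f z = ∫ p : ℝ × ℝ, f ⟨p.1, p.2⟩ :=
  (Complex.volume_preserving_equiv_real_prod.symm.integral_comp
    Complex.measurableEquivRealProd.symm.measurableEmbedding f).symm

theorem integral_fourier_one_sub_mul_normSq_mul_gaussian {a : ℝ} (ha : 0 < a) (x : ℂ) :
    ∫ p : ℂ, Complex.exp (-Complex.I * (((starRingEnd ℂ p) * x).re : ℂ))
      * (((1 - a * Complex.normSq p) * rexp (-(a * Complex.normSq p)) : ℝ) : ℂ)
    = π / a * (Complex.normSq x / (4 * a)) * Complex.exp (-Complex.normSq x / (4 * a)) := by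
  set g₁ := modulatedGaussian a x.re
  set g₂ := modulatedGaussian a x.im
  have hsplit : ∀ p : ℂ, Complex.exp (-Complex.I * (((starRingEnd ℂ p) * x).re : ℂ))
      * (((1 - a * Complex.normSq p) * rexp (-(a * Complex.normSq p)) : ℝ) : ℂ)
      = ((1 - 2 * a * (p.re : ℂ) ^ 2) * g₁ p.re * g₂ p.im
          + g₁ p.re * ((1 - 2 * a * (p.im : ℂ) ^ 2) * g₂ p.im)) / 2 := by
    intro p
    have h := modulatedGaussian_re_mul_modulatedGaussian_im (a := a) x p
    rw [Complex.normSq_apply] at h ⊢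
    push_cast at h ⊢
    linear_combination (-(1 - a * (p.re * p.re + p.im * p.im)) : ℂ) * h
  have hquad := integrable_one_sub_sq_mul_modulatedGaussian ha
  simp only [hsplit, integral_complex_eq_integral_prod, Measure.volume_eq_prod]
  rw [integral_div, integral_add ((hquad _).mul_prod (integrable_modulatedGaussian ha _))
    ((integrable_modulatedGaussian ha _).mul_prod (hquad _)),
    integral_prod_mul (fun t : ℝ => (1 - 2 * a * (t : ℂ) ^ 2) * g₁ t) g₂,
    integral_prod_mul g₁ (fun t : ℝ => (1 - 2 * a * (t : ℂ) ^ 2) * g₂ t),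
    integral_one_sub_sq_mul_modulatedGaussian ha, integral_one_sub_sq_mul_modulatedGaussian ha,
    integral_modulatedGaussian ha, integral_modulatedGaussian ha]
  have hsqrt : ((π / a : ℂ) ^ (1 / 2 : ℂ)) * (π / a : ℂ) ^ (1 / 2 : ℂ) = π / a := by
    rw [← Complex.cpow_add _ _ (by exact_mod_cast (div_pos pi_pos ha).ne')]; norm_num
  have hexp : Complex.exp (-x.re ^ 2 / (4 * a)) * Complex.exp (-x.im ^ 2 / (4 * a))
      = Complex.exp (-Complex.normSq x / (4 * a)) := by
    rw [← Complex.exp_add, Complex.normSq_apply]; push_cast; ring_nf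
  rw [← hexp, Complex.normSq_apply]
  push_cast
  linear_combination (Complex.exp (-x.re ^ 2 / (4 * a)) * Complex.exp (-x.im ^ 2 / (4 * a))
    * (x.re * x.re + x.im * x.im) / (4 * a)) * hsqrt

theorem integral_cexp_neg_mul_normSq {b : ℂ} (hb : 0 < b.re) :
    ∫ z : ℂ, Complex.exp (-b * Complex.normSq z) = π / b := by
  simpa [Complex.normSq_eq_norm_sq] using GaussianFourier.integral_cexp_neg_mul_sq_norm (V := ℂ) hb

noncomputable def varpiAmplitude (ν : ℝ) (α : ℝ → ℂ) (q : ℂ) : ℂ :=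
  ((rexp (2 * ν) / ‖q‖ * rexp (-(ν * (‖q‖ + 1 / ‖q‖))) : ℝ) : ℂ) * α (Complex.arg q)

theorem hatvarpi_eq {ν σ : ℝ} (hσ : σ ≠ 0) (α : ℝ → ℂ) {q : ℂ} (hq : q ≠ 0) (x : ℂ) :
    hatvarpi ν σ α q x = varpiAmplitude ν α q
      * (σ ^ 4 / (2 * ‖q‖ ^ 2) * Complex.normSq x
        * Complex.exp (-(σ ^ 2 / (2 * ‖q‖)) * Complex.normSq x)) := by
  set a := ‖q‖ / (2 * σ ^ 2) with ha_def
  have ha : 0 < a := by positivity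
  have hvarpi : ∀ p, varpi ν σ α q p = varpiAmplitude ν α q
      * (((1 - a * Complex.normSq p) * rexp (-(a * Complex.normSq p)) : ℝ) : ℂ) := by
    intro p
    simp only [varpi, varpiAmplitude, ha_def, div_mul_eq_mul_div]
  simp only [hatvarpi, hvarpi, mul_left_comm _ (varpiAmplitude ν α q), integral_const_mul,
    integral_fourier_one_sub_mul_normSq_mul_gaussian ha]
  have : ‖q‖ ≠ 0 := norm_ne_zero_iff.mpr hq
  rw [ha_def]
  push_cast
  field_simp
  ring_nf

theorem OmegaAff_eq {ν σ : ℝ} (hσ : σ ≠ 0) (α : ℝ → ℂ) {q : ℂ} (hq : q ≠ 0) :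
    OmegaAff ν σ α q = varpiAmplitude ν α q * (π * σ ^ 2 / ‖q‖) := by
  have hae : (fun x => hatvarpi ν σ α q x / Complex.normSq x) =ᵐ[volume]
      fun x => varpiAmplitude ν α q * (σ ^ 4 / (2 * ‖q‖ ^ 2))
        * Complex.exp (-(σ ^ 2 / (2 * ‖q‖) : ℝ) * Complex.normSq x) := by
    filter_upwards [measure_eq_zero_iff_ae_notMem.mp (measure_singleton (μ := volume) (0 : ℂ))]
      with x hx
    have : (Complex.normSq x : ℂ) ≠ 0 := by simpa using hx
    rw [hatvarpi_eq hσ α hq]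
    push_cast
    field_simp
  have hb : 0 < ((σ ^ 2 / (2 * ‖q‖) : ℝ) : ℂ).re := by
    simp only [Complex.ofReal_re]; positivity
  rw [OmegaAff, integral_congr_ae hae, integral_const_mul, integral_cexp_neg_mul_normSq hb]
  have : ‖q‖ ≠ 0 := norm_ne_zero_iff.mpr hq
  push_cast
  field_simp

theorem OmegaAff_closed_form_general (ν σ : ℝ) (hσ : 0 < σ) (α : ℝ → ℂ)
    (hα0 : α 0 = 1) :
    (∀ q : ℂ, q ≠ 0 →
      OmegaAff ν σ α q
        = ((π * σ ^ 2 * Real.exp (2 * ν) / ‖q‖ ^ 2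
            * Real.exp (-(ν * (‖q‖ + 1 / ‖q‖))) : ℝ) : ℂ)
          * α (Complex.arg q)) ∧
    OmegaAff ν σ α 1 = ((π * σ ^ 2 : ℝ) : ℂ) := by
  have hclosed : ∀ q : ℂ, q ≠ 0 → OmegaAff ν σ α q
      = ((π * σ ^ 2 * Real.exp (2 * ν) / ‖q‖ ^ 2
          * Real.exp (-(ν * (‖q‖ + 1 / ‖q‖))) : ℝ) : ℂ) * α (Complex.arg q) := by
    intro q hq
    have : ‖q‖ ≠ 0 := norm_ne_zero_iff.mpr hq
    rw [OmegaAff_eq hσ.ne' α hq, varpiAmplitude]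
    push_cast
    field_simp
  refine ⟨hclosed, ?_⟩
  have hexp : rexp (2 * ν) * rexp (-(ν * (1 + 1 / 1))) = 1 := by
    rw [← Real.exp_add, Real.exp_eq_one_iff]; ring
  rw [hclosed 1 one_ne_zero, Complex.arg_one, hα0, norm_one, mul_one, one_pow, div_one,
    mul_assoc, hexp, mul_one]

/-- For the weight ϖ above, Ω(q) = (πσ²e^{2ν}/|q|²) e^{-ν(|q|+1/|q|)} α(arg q);
in particular Ω(1) = πσ². -/
theorem OmegaAff_closed_form (ν σ : ℝ) (hν : 0 < ν) (hσ : 0 < σ) (α : ℝ → ℂ)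
    (hα : ∀ θ : ℝ, starRingEnd ℂ (α θ) = α (-θ)) (hα0 : α 0 = 1) :
    (∀ q : ℂ, q ≠ 0 →
      OmegaAff ν σ α q
        = ((π * σ ^ 2 * Real.exp (2 * ν) / ‖q‖ ^ 2
            * Real.exp (-(ν * (‖q‖ + 1 / ‖q‖))) : ℝ) : ℂ)
          * α (Complex.arg q)) ∧
    OmegaAff ν σ α 1 = ((π * σ ^ 2 : ℝ) : ℂ) :=
  OmegaAff_closed_form_general ν σ hσ α hα0
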